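/- arXiv:2507.09314 — 5 statements merged into one kernel-verified Lean document; each statement's English description precedes it below -/
import Mathlib

section
/- Let A be a closed densely defined skew-symmetric operator on a real Hilbert space H and T_t = e^{tB} a C₀-semigroup with generator B. If for every u₀ ∈ H the function u(t) = T_t u₀ is a generalized solution of u' = A*u with initial data u₀, then B ⊆ A*. -/
open MeasureTheory Filter

local notation "⟪" x ", " y "⟫" => @inner ℝ _ _ x y

variable {H : Type*} [NormedAddCommGroup H] [InnerProductSpace ℝ H] [CompleteSpace H]

/-- `u ∈ L^∞_loc([0,∞), H)`. -/
def LinftyLoc (u : ℝ → H) : Prop :=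
  AEStronglyMeasurable u volume ∧
    ∀ r : ℝ, 0 < r → ∃ C : ℝ, ∀ᵐ t ∂(volume : Measure ℝ), t ∈ Set.Icc (0 : ℝ) r → ‖u t‖ ≤ C

/-- `u` is a generalized solution of `u' = A*u`, `u(0) = u₀`: `u ∈ L^∞_loc([0,∞),H)` and for
every compactly supported `C¹` test function `f` with values in `D(A)` (with graph norm, i.e.
`f` and `g = A ∘ f` are continuous),
`∫_{0}^{∞} (u(t), f'(t) + A f(t)) dt + (u₀, f(0)) = 0`. -/
def IsGenSol (A : H →ₗ.[ℝ] H) (u₀ : H) (u : ℝ → H) : Prop :=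
  LinftyLoc u ∧
    ∀ f f' g : ℝ → H, (∀ t, HasDerivAt f (f' t) t) → Continuous f' →
      HasCompactSupport f → Continuous g →
      (∀ t : ℝ, ∃ h : f t ∈ A.domain, A ⟨f t, h⟩ = g t) →
      (∫ t in Set.Ioi (0 : ℝ), ⟪u t, f' t + g t⟫) + ⟪u₀, f 0⟫ = 0

/-- `B` is the infinitesimal generator of the semigroup `T`. -/
def IsGenerator (T : ℝ → H →L[ℝ] H) (B : H →ₗ.[ℝ] H) : Prop :=
  ∀ u v : H,
    (∃ hu : u ∈ B.domain, B ⟨u, hu⟩ = v) ↔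
      Tendsto (fun t : ℝ => t⁻¹ • (T t u - u)) (nhdsWithin 0 (Set.Ioi 0)) (nhds v)

section AuxLemmas
open Set Metric
open scoped ContDiff

lemma aux_int {h : ℝ → ℝ} (hc : Continuous h) (hs : ∀ s, s ∉ Set.Icc (-2:ℝ) 2 → h s = 0) :
    IntegrableOn h (Set.Ioi 0) volume :=
  (hc.integrable_of_hasCompactSupport (HasCompactSupport.intro isCompact_Icc hs)).integrableOn

lemma aux_chi : ∃ χ χ' : ℝ → ℝ, (∀ t, HasDerivAt χ (χ' t) t) ∧ Continuous χ ∧ Continuous χ' ∧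
    χ 0 = 1 ∧ (∀ s, 0 ≤ χ s) ∧ (∀ s, s ∉ Set.Icc (-2:ℝ) 2 → χ s = 0 ∧ χ' s = 0) ∧
    HasCompactSupport χ ∧ (∫ s in Set.Ioi (0:ℝ), χ' s) = -1 ∧
    (∫ s in Set.Ioi (0:ℝ), (χ s + s * χ' s)) = 0 ∧ 0 < ∫ s in Set.Ioi (0:ℝ), χ s := by
  let f₀ : ContDiffBump (0:ℝ) := ⟨1, 2, one_pos, one_lt_two⟩
  set χ : ℝ → ℝ := fun x => f₀ x with hχdef
  have hcd : ContDiff ℝ ∞ χ := f₀.contDiff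
  have hχd : ∀ t, HasDerivAt χ (deriv χ t) t := fun t =>
    ((hcd.differentiable (by norm_num)) t).hasDerivAt
  have hχc : Continuous χ := f₀.continuous
  have hχ'c : Continuous (deriv χ) := ((contDiff_infty_iff_deriv.mp hcd).2).continuous
  have hts : tsupport χ = Set.Icc (-2:ℝ) 2 := by
    rw [f₀.tsupport_eq]
    show closedBall (0:ℝ) 2 = _
    rw [Real.closedBall_eq_Icc]; norm_num
  have hsupp : ∀ s, s ∉ Set.Icc (-2:ℝ) 2 → χ s = 0 ∧ deriv χ s = 0 := by
    intro s hs
    rw [← hts] at hs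
    exact ⟨image_eq_zero_of_notMem_tsupport hs,
      Function.notMem_support.mp (fun h => hs (support_deriv_subset h))⟩
  have hχ0 : χ 0 = 1 := f₀.one_of_mem_closedBall (by simp : (0:ℝ) ∈ closedBall 0 1)
  have hcs : HasCompactSupport χ := f₀.hasCompactSupport
  have hI1 : (∫ s in Set.Ioi (0:ℝ), deriv χ s) = -1 := by
    rw [HasCompactSupport.integral_Ioi_deriv_eq (hcd.of_le (by norm_num)) hcs 0, hχ0]
  have hI2 : (∫ s in Set.Ioi (0:ℝ), (χ s + s * deriv χ s)) = 0 := by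
    have hψc : ContDiff ℝ 1 (fun s => s * χ s) := contDiff_id.mul (hcd.of_le (by norm_num))
    have hψs : HasCompactSupport (fun s => s * χ s) := by
      apply hcs.mono'
      intro s hs
      simp only [Function.mem_support] at hs
      exact subset_tsupport χ (fun h => hs (by rw [h, mul_zero]))
    have := HasCompactSupport.integral_Ioi_deriv_eq hψc hψs 0
    have hder : deriv (fun s => s * χ s) = fun s => χ s + s * deriv χ s := by
      funext s
      have hd : HasDerivAt (fun s => s * χ s) (1 * χ s + s * deriv χ s) s :=
        (hasDerivAt_id s).mul (hχd s)
      rw [hd.deriv]; ring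
    rw [hder] at this
    simpa using this
  have hpos : 0 < ∫ s in Set.Ioi (0:ℝ), χ s := by
    rw [setIntegral_pos_iff_support_of_nonneg_ae (Filter.Eventually.of_forall f₀.nonneg')
      (aux_int hχc (fun s hs => (hsupp s hs).1))]
    have hsub : Set.Ioo (0:ℝ) 1 ⊆ Function.support χ ∩ Set.Ioi 0 := by
      intro x hx
      refine ⟨?_, hx.1⟩
      rw [f₀.support_eq]
      show x ∈ ball (0:ℝ) 2
      simp only [mem_ball, Real.dist_eq, sub_zero]
      rw [abs_of_pos hx.1]; linarith [hx.2]
    calc (0:ENNReal) < volume (Set.Ioo (0:ℝ) 1) := by simp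
      _ ≤ _ := measure_mono hsub
  exact ⟨χ, deriv χ, hχd, hχc, hχ'c, hχ0, f₀.nonneg', hsupp, hcs, hI1, hI2, hpos⟩

end AuxLemmas

/-- If `T_t = e^{tB}` is a `C₀`-semigroup such that `u(t) = T_t u₀` is a generalized solution of
`u' = A*u`, `u(0) = u₀` for every `u₀ ∈ H`, then `B ⊆ A*`. -/
theorem generator_le_adjoint_of_semigroup_isGenSol
    (A B : H →ₗ.[ℝ] H) (hAdense : Dense (A.domain : Set H)) (hAclosed : A.IsClosed)
    (hskew : ∀ u v : A.domain, ⟪A u, (v : H)⟫ = -⟪(u : H), A v⟫)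
    (T : ℝ → H →L[ℝ] H) (hT0 : T 0 = 1)
    (hTadd : ∀ s t : ℝ, 0 ≤ s → 0 ≤ t → T (s + t) = (T s).comp (T t))
    (hTcont : ∀ x : H, Continuous fun t => T t x)
    (hgen : IsGenerator T B)
    (hsol : ∀ u₀ : H, IsGenSol A u₀ fun t => T t u₀) :
    B ≤ A.adjoint := by
  obtain ⟨χ, χ', hχd, hχc, hχ'c, hχ0, hχnn, hχsupp, hχcs, hI1, hI2, hIpos⟩ := aux_chi
  -- the key identity
  have key : ∀ (y : B.domain) (w : A.domain), ⟪(y : H), (A w : H)⟫ = ⟪B y, (w : H)⟫ := by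
    intro y w
    set u₀ : H := (y : H) with hu₀
    set v : H := B y with hv
    set wH : H := (w : H) with hwH
    set AwH : H := (A w : H) with hAwH
    have htend : Tendsto (fun t : ℝ => t⁻¹ • (T t u₀ - u₀)) (nhdsWithin 0 (Set.Ioi 0)) (nhds v) :=
      (hgen u₀ v).mp ⟨y.2, by rw [Subtype.coe_eta]⟩
    set vfun : ℝ → H := fun t => if 0 < t then t⁻¹ • (T t u₀ - u₀) else v with hvfun
    have hv0 : vfun 0 = v := if_neg (lt_irrefl 0)
    have hvc : Continuous vfun := by
      rw [continuous_iff_continuousAt]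
      intro t
      rcases lt_trichotomy t 0 with h | h | h
      · have hev : vfun =ᶠ[nhds t] fun _ : ℝ => v := by
          filter_upwards [Iio_mem_nhds h] with s hs
          exact if_neg (not_lt.mpr (le_of_lt hs))
        exact (continuousAt_congr hev).mpr continuousAt_const
      · subst h
        have h1 : Tendsto vfun (nhdsWithin 0 (Set.Iic 0)) (nhds v) := by
          apply tendsto_const_nhds.congr'
          filter_upwards [self_mem_nhdsWithin] with s hs
          exact (if_neg (not_lt.mpr hs)).symm
        have h2 : Tendsto vfun (nhdsWithin 0 (Set.Ioi 0)) (nhds v) := by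
          apply htend.congr'
          filter_upwards [self_mem_nhdsWithin] with s hs
          exact (if_pos hs).symm
        have h3 : Tendsto vfun (nhds 0) (nhds v) := by
          rw [← nhdsLE_sup_nhdsGT (0:ℝ)]
          exact tendsto_sup.mpr ⟨h1, h2⟩
        rw [ContinuousAt, hv0]
        exact h3
      · have hev : vfun =ᶠ[nhds t] fun s : ℝ => s⁻¹ • (T s u₀ - u₀) := by
          filter_upwards [Ioi_mem_nhds h] with s hs
          exact if_pos hs
        exact (continuousAt_congr hev).mpr
          ((continuousAt_id.inv₀ (ne_of_gt h)).smul
            (((hTcont u₀).continuousAt).sub continuousAt_const))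
    -- bounds on [-2,2]
    obtain ⟨M₁, hM₁⟩ := isCompact_Icc.exists_bound_of_continuousOn
      (hvc.continuousOn : ContinuousOn vfun (Set.Icc (-2:ℝ) 2))
    obtain ⟨M₂, hM₂⟩ := isCompact_Icc.exists_bound_of_continuousOn
      ((hTcont u₀).continuousOn : ContinuousOn (fun t => T t u₀) (Set.Icc (-2:ℝ) 2))
    set F : ℝ → ℝ := fun t => ⟪T t u₀, wH⟫ with hF
    set G : ℝ → ℝ := fun t => ⟪T t u₀, AwH⟫ with hG
    have hFc : Continuous F := Continuous.inner (hTcont u₀) continuous_const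
    have hGc : Continuous G := Continuous.inner (hTcont u₀) continuous_const
    have hF0 : F 0 = ⟪u₀, wH⟫ := by rw [hF]; simp [hT0]
    have hG0 : G 0 = ⟪u₀, AwH⟫ := by rw [hG]; simp [hT0]
    set Fc : ℝ → ℝ → ℝ := fun c s => χ' s * (s * ⟪vfun (s/c), wH⟫) + χ s * G (s/c) with hFcdef
    -- per-c identity
    have hnum : ∀ c : ℝ, 1 ≤ c → (∫ s in Set.Ioi (0:ℝ), Fc c s) = 0 := by
      intro c hc
      have hc0 : (0:ℝ) < c := lt_of_lt_of_le one_pos hc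
      have hcne : c ≠ 0 := ne_of_gt hc0
      have base : (∫ t in Set.Ioi (0:ℝ), ((c * χ' (c*t)) * F t + χ (c*t) * G t))
          + ⟪u₀, wH⟫ = 0 := by
        have h1 : ∀ t : ℝ, HasDerivAt (fun t => χ (c*t) • wH) ((c * χ' (c*t)) • wH) t := by
          intro t
          have hct : HasDerivAt (fun t : ℝ => c * t) c t := by
            simpa using (hasDerivAt_id t).const_mul c
          have hcc := ((hχd (c*t)).comp t hct).smul_const wH
          have : χ' (c*t) * c = c * χ' (c*t) := mul_comm _ _
          rw [this] at hcc
          exact hcc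
        have h2 : Continuous fun t => (c * χ' (c*t)) • wH :=
          ((continuous_const.mul (hχ'c.comp (continuous_const.mul continuous_id))).smul
            continuous_const)
        have hχcomp : HasCompactSupport fun t : ℝ => χ (c*t) := by
          have := hχcs.comp_smul (c := c) hcne
          simpa [smul_eq_mul] using this
        have h3 : HasCompactSupport fun t => χ (c*t) • wH := by
          apply hχcomp.mono'
          intro t ht
          apply subset_tsupport
          simp only [Function.mem_support] at ht ⊢
          intro h0
          exact ht (by rw [h0, zero_smul])
        have h4 : Continuous fun t => χ (c*t) • AwH :=
          ((hχc.comp (continuous_const.mul continuous_id)).smul continuous_const)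
        have h5 : ∀ t : ℝ, ∃ h : (fun t => χ (c*t) • wH) t ∈ A.domain,
            A ⟨(fun t => χ (c*t) • wH) t, h⟩ = (fun t => χ (c*t) • AwH) t := by
          intro t
          refine ⟨A.domain.smul_mem (χ (c*t)) w.2, ?_⟩
          have he : (⟨χ (c*t) • wH, A.domain.smul_mem (χ (c*t)) w.2⟩ : A.domain)
              = χ (c*t) • w := rfl
          rw [he, A.map_smul]
        have hb := (hsol u₀).2 (fun t => χ (c*t) • wH) (fun t => (c * χ' (c*t)) • wH)
          (fun t => χ (c*t) • AwH) h1 h2 h3 h4 h5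
        simp only [mul_zero, hχ0, one_smul] at hb
        have heq : (∫ t in Set.Ioi (0:ℝ), ((c * χ' (c*t)) * F t + χ (c*t) * G t))
            = ∫ t in Set.Ioi (0:ℝ), ⟪T t u₀, (c * χ' (c*t)) • wH + χ (c*t) • AwH⟫ :=
          setIntegral_congr_fun measurableSet_Ioi (fun t _ => by
            simp [inner_add_right, real_inner_smul_right, hF, hG])
        rw [heq]
        exact hb
      set Hc : ℝ → ℝ := fun s => c * χ' s * F (s/c) + χ s * G (s/c) with hHc
      have hHcc : Continuous Hc :=
        ((continuous_const.mul hχ'c).mul (hFc.comp (continuous_id.div_const c))).add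
          (hχc.mul (hGc.comp (continuous_id.div_const c)))
      have hHint : IntegrableOn Hc (Set.Ioi 0) volume :=
        aux_int hHcc (fun s hs => by
          rw [hHc]; simp [(hχsupp s hs).1, (hχsupp s hs).2])
      have hcomp : ∀ t : ℝ, (c * χ' (c*t)) * F t + χ (c*t) * G t = Hc (c*t) := by
        intro t
        rw [hHc]
        simp only
        rw [mul_div_cancel_left₀ t hcne]
      have cov : (∫ t in Set.Ioi (0:ℝ), Hc (c*t)) = c⁻¹ • ∫ s in Set.Ioi (c*0), Hc s :=
        MeasureTheory.integral_comp_mul_left_Ioi Hc 0 hc0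
      have hHval : (∫ s in Set.Ioi (0:ℝ), Hc s) = -(c * ⟪u₀, wH⟫) := by
        rw [setIntegral_congr_fun measurableSet_Ioi (fun t _ => hcomp t), cov, mul_zero,
          smul_eq_mul] at base
        field_simp at base
        linarith
      have hχ'int : IntegrableOn (fun s => (c * ⟪u₀, wH⟫) * χ' s) (Set.Ioi 0) volume :=
        (aux_int hχ'c (fun s hs => (hχsupp s hs).2)).const_mul _
      have hFceq : ∀ s ∈ Set.Ioi (0:ℝ), Fc c s = Hc s - (c * ⟪u₀, wH⟫) * χ' s := by
        intro s hs
        have hs0 : (0:ℝ) < s := hs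
        have hsne : s ≠ 0 := ne_of_gt hs0
        have hsc : 0 < s / c := div_pos hs0 hc0
        rw [hFcdef, hHc]
        simp only
        rw [hvfun]
        simp only [if_pos hsc]
        rw [real_inner_smul_left, inner_sub_left]
        have hFdef : ⟪T (s/c) u₀, wH⟫ = F (s/c) := rfl
        rw [hFdef]
        field_simp
        ring
      rw [setIntegral_congr_fun measurableSet_Ioi hFceq,
        integral_sub hHint hχ'int, hHval, MeasureTheory.integral_const_mul, hI1]
      ring
    -- dominated convergence
    have hlim : Tendsto (fun c => ∫ s in Set.Ioi (0:ℝ), Fc c s) atTop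
        (nhds (∫ s in Set.Ioi (0:ℝ), (χ' s * (s * ⟪v, wH⟫) + χ s * ⟪u₀, AwH⟫))) := by
      apply tendsto_integral_filter_of_dominated_convergence
        (bound := fun s => |χ' s| * (|s| * (M₁ * ‖wH‖)) + |χ s| * (M₂ * ‖AwH‖))
      · refine Eventually.of_forall (fun c => Continuous.aestronglyMeasurable ?_)
        exact ((hχ'c.mul (continuous_id.mul
          ((hvc.comp (continuous_id.div_const c)).inner continuous_const))).add
          (hχc.mul (hGc.comp (continuous_id.div_const c))))
      · filter_upwards [eventually_ge_atTop (1:ℝ)] with c hc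
        refine (ae_restrict_iff' measurableSet_Ioi).mpr (Eventually.of_forall fun s hs => ?_)
        by_cases hmem : s ∈ Set.Icc (-2:ℝ) 2
        · have hc0 : (0:ℝ) < c := lt_of_lt_of_le one_pos hc
          have hs0 : (0:ℝ) < s := hs
          have hsc : s/c ∈ Set.Icc (-2:ℝ) 2 := by
            constructor
            · have : 0 < s/c := div_pos hs0 hc0
              linarith
            · calc s/c ≤ s := div_le_self (le_of_lt hs0) hc
                _ ≤ 2 := hmem.2
          have b1 : |⟪vfun (s/c), wH⟫| ≤ M₁ * ‖wH‖ :=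
            le_trans (abs_real_inner_le_norm _ _)
              (mul_le_mul_of_nonneg_right (hM₁ _ hsc) (norm_nonneg _))
          have b2 : |G (s/c)| ≤ M₂ * ‖AwH‖ :=
            le_trans (abs_real_inner_le_norm _ _)
              (mul_le_mul_of_nonneg_right (hM₂ _ hsc) (norm_nonneg _))
          rw [Real.norm_eq_abs]
          refine le_trans (abs_add_le _ _) ?_
          rw [abs_mul, abs_mul, abs_mul]
          gcongr
          all_goals try exact abs_nonneg _
        · have h0 := hχsupp s hmem
          simp [hFcdef, h0.1, h0.2]
      · exact aux_int (by
            exact ((hχ'c.abs.mul (continuous_abs.mul continuous_const)).add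
              (hχc.abs.mul continuous_const)))
          (fun s hs => by simp [(hχsupp s hs).1, (hχsupp s hs).2])
      · refine Eventually.of_forall (fun s => ?_)
        have hdiv : Tendsto (fun c : ℝ => s / c) atTop (nhds 0) :=
          tendsto_const_nhds.div_atTop tendsto_id
        have t1 : Tendsto (fun c : ℝ => vfun (s/c)) atTop (nhds v) := by
          have := (hvc.tendsto 0).comp hdiv
          rwa [hv0] at this
        have t2 : Tendsto (fun c : ℝ => G (s/c)) atTop (nhds ⟪u₀, AwH⟫) := by
          have := (hGc.tendsto 0).comp hdiv
          rwa [hG0] at this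
        have t1' : Tendsto (fun c : ℝ => ⟪vfun (s/c), wH⟫) atTop (nhds ⟪v, wH⟫) :=
          t1.inner tendsto_const_nhds
        exact ((t1'.const_mul s).const_mul (χ' s)).add (t2.const_mul (χ s))
    have hzero : (∫ s in Set.Ioi (0:ℝ), (χ' s * (s * ⟪v, wH⟫) + χ s * ⟪u₀, AwH⟫)) = 0 :=
      tendsto_nhds_unique hlim ((tendsto_const_nhds (α := ℝ)).congr'
        (by filter_upwards [eventually_ge_atTop (1:ℝ)] with c hc; exact (hnum c hc).symm))
    -- conclude
    have hint1 : IntegrableOn (fun s => (s * χ' s) * ⟪v, wH⟫) (Set.Ioi 0) volume :=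
      (aux_int (continuous_id.mul hχ'c)
        (fun s hs => by rw [Pi.mul_apply, (hχsupp s hs).2, mul_zero])).mul_const _
    have hint2 : IntegrableOn (fun s => χ s * ⟪u₀, AwH⟫) (Set.Ioi 0) volume :=
      (aux_int hχc (fun s hs => (hχsupp s hs).1)).mul_const _
    have hintχ : IntegrableOn χ (Set.Ioi 0) volume :=
      aux_int hχc (fun s hs => (hχsupp s hs).1)
    have hintsχ' : IntegrableOn (fun s => s * χ' s) (Set.Ioi 0) volume :=
      aux_int (continuous_id.mul hχ'c) (fun s hs => by rw [(hχsupp s hs).2, mul_zero])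
    have hsplit : (∫ s in Set.Ioi (0:ℝ), (χ' s * (s * ⟪v, wH⟫) + χ s * ⟪u₀, AwH⟫))
        = (∫ s in Set.Ioi (0:ℝ), (s * χ' s)) * ⟪v, wH⟫
          + (∫ s in Set.Ioi (0:ℝ), χ s) * ⟪u₀, AwH⟫ := by
      rw [setIntegral_congr_fun measurableSet_Ioi
        (g := fun s => (s * χ' s) * ⟪v, wH⟫ + χ s * ⟪u₀, AwH⟫) (fun s _ => by ring),
        integral_add hint1 hint2, MeasureTheory.integral_mul_const,
        MeasureTheory.integral_mul_const]
    have hI2' : (∫ s in Set.Ioi (0:ℝ), (s * χ' s)) = -(∫ s in Set.Ioi (0:ℝ), χ s) := by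
      rw [integral_add hintχ hintsχ'] at hI2
      linarith
    rw [hsplit, hI2'] at hzero
    have hne : (∫ s in Set.Ioi (0:ℝ), χ s) ≠ 0 := ne_of_gt hIpos
    have : (∫ s in Set.Ioi (0:ℝ), χ s) * ⟪u₀, AwH⟫
        = (∫ s in Set.Ioi (0:ℝ), χ s) * ⟪v, wH⟫ := by linarith
    exact mul_left_cancel₀ hne this
  have formal : A.IsFormalAdjoint B := by
    intro w y
    calc ⟪A w, (y : H)⟫ = ⟪(y : H), A w⟫ := real_inner_comm _ _
      _ = ⟪B y, (w : H)⟫ := key y w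
      _ = ⟪(w : H), B y⟫ := real_inner_comm _ _
  exact LinearPMap.IsFormalAdjoint.le_adjoint hAdense formal
end

section
/- Let A be a closed densely defined skew-symmetric operator on a real Hilbert space H, and let B be an m-dissipative operator on H (i.e., (Bu,u) ≤ 0 for all u ∈ D(B) and Range(I − hB) = H for all h > 0). Then B ⊆ A* if and only if −A ⊆ B. -/
local notation "⟪" x ", " y "⟫" => @inner ℝ _ _ x y

/-!
If `B ⊆ A*`, then for `u ∈ D(A)` the pair `(u, -Au)` is monotonically compatible with the graph
of `B`: `(Bw + Au, w - u) = (Bw, w) ≤ 0` for all `w ∈ D(B)`, because `(Bw, u) = (w, Au)` and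
`(Au, u) = 0`. Since `I - B` is surjective, the graph of `B` is maximal monotone, so `(u, -Au)`
lies on it (Minty), i.e. `-A ⊆ B`.

Conversely, if `-A ⊆ B`, then every `x ∈ D(A)` satisfies `(Bx, x) = 0`, and dissipativity of `B`
along the lines `y + t x` forces `(By, x) = -(Bx, y) = (Ax, y)`: `B` is a formal adjoint of `A`,
hence `B ⊆ A*`.
-/

namespace LinearPMap

variable {E : Type*} [NormedAddCommGroup E] [InnerProductSpace ℝ E]

theorem inner_apply_self_eq_zero_of_skew {A : E →ₗ.[ℝ] E}
    (hskew : ∀ u v : A.domain, ⟪A u, (v : E)⟫ = -⟪(u : E), A v⟫) (u : A.domain) :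
    ⟪A u, (u : E)⟫ = 0 := by
  have h := hskew u u
  rw [real_inner_comm (A u)] at h
  linarith

theorem mem_graph_of_forall_inner_sub_nonpos {B : E →ₗ.[ℝ] E}
    (hrange : ∀ v : E, ∃ w : B.domain, (w : E) - B w = v) {x z : E}
    (hxz : ∀ w : B.domain, ⟪B w - z, (w : E) - x⟫ ≤ 0) : (x, z) ∈ B.graph := by
  obtain ⟨w, hw⟩ := hrange (x - z)
  have hBw : B w - z = (w : E) - x := by linear_combination (norm := module) -hw
  have hwx : (w : E) = x := by
    have := hxz w
    rw [hBw] at this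
    exact sub_eq_zero.mp (real_inner_self_nonpos.mp this)
  exact (mem_graph_iff B).mpr ⟨w, hwx, by rw [← sub_eq_zero, hBw, hwx, sub_self]⟩

theorem inner_apply_add_inner_apply_eq_zero {B : E →ₗ.[ℝ] E}
    (hdiss : ∀ u : B.domain, ⟪B u, (u : E)⟫ ≤ 0) {x : B.domain} (hx : ⟪B x, (x : E)⟫ = 0)
    (y : B.domain) : ⟪B y, (x : E)⟫ + ⟪B x, (y : E)⟫ = 0 := by
  have hline : ∀ t : ℝ, ⟪B y, (y : E)⟫ + t * (⟪B y, (x : E)⟫ + ⟪B x, (y : E)⟫) ≤ 0 := by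
    intro t
    have h := hdiss (y + t • x)
    simp only [map_add, map_smul, Submodule.coe_add, Submodule.coe_smul, inner_add_left,
      inner_add_right, real_inner_smul_left, real_inner_smul_right, hx] at h
    linarith
  by_contra hne
  have h := hline ((1 - ⟪B y, (y : E)⟫) / (⟪B y, (x : E)⟫ + ⟪B x, (y : E)⟫))
  rw [div_mul_cancel₀ _ hne] at h
  linarith

end LinearPMap

open LinearPMap

theorem le_adjoint_iff_neg_le_general
    {H : Type*} [NormedAddCommGroup H] [InnerProductSpace ℝ H] [CompleteSpace H]
    (A B : H →ₗ.[ℝ] H) (hAdense : Dense (A.domain : Set H))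
    (hskew : ∀ u v : A.domain, ⟪A u, (v : H)⟫ = -⟪(u : H), A v⟫)
    (hdiss : ∀ u : B.domain, ⟪B u, (u : H)⟫ ≤ 0)
    (hm : ∀ h : ℝ, 0 < h → ∀ v : H, ∃ u : B.domain, (u : H) - h • B u = v) :
    B ≤ A.adjoint ↔ -A ≤ B := by
  have hrange : ∀ v : H, ∃ w : B.domain, (w : H) - B w = v := by
    simpa only [one_smul] using hm 1 one_pos
  have hAskew := inner_apply_self_eq_zero_of_skew hskew
  constructor
  · intro hB
    refine le_of_le_graph fun p hp => ?_
    obtain ⟨u, rfl⟩ := (mem_graph_iff' _).mp hp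
    refine mem_graph_of_forall_inner_sub_nonpos hrange fun w => ?_
    have hBw : ⟪B w, (u : H)⟫ = ⟪(w : H), A u⟫ := by
      rw [hB.2 (y := ⟨w, hB.1 w.2⟩) rfl]
      exact adjoint_isFormalAdjoint hAdense _ u
    have h := hdiss w
    rw [LinearPMap.neg_apply, sub_neg_eq_add, inner_add_left, inner_sub_right, inner_sub_right,
      hBw, hAskew u, real_inner_comm (A u)]
    linarith
  · intro hA
    refine IsFormalAdjoint.le_adjoint hAdense fun x y => ?_
    have hBx : B ⟨x, hA.1 x.2⟩ = -A x := (hA.2 rfl).symm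
    have h := inner_apply_add_inner_apply_eq_zero hdiss (x := ⟨x, hA.1 x.2⟩)
      (by rw [hBx, inner_neg_left, hAskew, neg_zero]) y
    rw [hBx, inner_neg_left] at h
    rw [real_inner_comm (B y)]
    linarith

/-- Let `A` be a closed densely defined skew-symmetric operator on a real Hilbert space `H` and
`B` an `m`-dissipative operator (`(Bu,u) ≤ 0` on `D(B)` and `Range(I − hB) = H` for all `h > 0`).
Then `B ⊆ A*` iff `−A ⊆ B`. -/
theorem le_adjoint_iff_neg_le
    {H : Type*} [NormedAddCommGroup H] [InnerProductSpace ℝ H] [CompleteSpace H]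
    (A B : H →ₗ.[ℝ] H) (hAdense : Dense (A.domain : Set H)) (hAclosed : A.IsClosed)
    (hskew : ∀ u v : A.domain, ⟪A u, (v : H)⟫ = -⟪(u : H), A v⟫)
    (hdiss : ∀ u : B.domain, ⟪B u, (u : H)⟫ ≤ 0)
    (hm : ∀ h : ℝ, 0 < h → ∀ v : H, ∃ u : B.domain, (u : H) - h • B u = v) :
    B ≤ A.adjoint ↔ -A ≤ B :=
  le_adjoint_iff_neg_le_general A B hAdense hskew hdiss hm
end

section
/- Let A be a closed densely defined skew-symmetric operator on a real Hilbert space H, B an m-dissipative operator with B ⊆ A*, and −A ⊆ B. Define B̃ on D(A)+D(B) by B̃(u₁+u₂) = −Au₁ + Bu₂ for u₁ ∈ D(A), u₂ ∈ D(B). Then B̃ is well-defined and dissipative: (B̃u, u) ≤ 0 for all u ∈ D(A)+D(B). -/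
/-!
The operator `B̃` is the supremum of `-A` and `B` as partial linear maps, which exists because
`-A ≤ B`; this gives well-definedness. For dissipativity, expand `(B̃u, u)` with `u = u₁ + u₂`:
`(Au₁, u₁)` vanishes by skew-symmetry, and the cross terms `-(Au₁, u₂)` and `(Bu₂, u₁)` cancel
because `B ⊆ A*`, leaving `(Bu₂, u₂) ≤ 0`.
-/

local notation "⟪" x ", " y "⟫" => @inner ℝ _ _ x y

namespace LinearPMap

theorem add_apply_eq_of_le {R E F : Type*} [Ring R] [AddCommGroup E] [Module R E]
    [AddCommGroup F] [Module R F] {f g : E →ₗ.[R] F} (hfg : f ≤ g) {x x' : f.domain}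
    {y y' : g.domain} (h : (x : E) + y = x' + y') : f x + g y = f x' + g y' := by
  let z : ↥(f.domain ⊔ g.domain) := ⟨x + y, Submodule.add_mem_sup x.2 y.2⟩
  rw [← sup_apply hfg.2 x y z rfl, ← sup_apply hfg.2 x' y' z h.symm]

theorem isFormalAdjoint_of_le_adjoint {𝕜 E F : Type*} [RCLike 𝕜] [NormedAddCommGroup E]
    [InnerProductSpace 𝕜 E] [NormedAddCommGroup F] [InnerProductSpace 𝕜 F] [CompleteSpace E]
    {T : E →ₗ.[𝕜] F} {S : F →ₗ.[𝕜] E} (hT : Dense (T.domain : Set E)) (hST : S ≤ T†) :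
    S.IsFormalAdjoint T := fun y x => by
  rw [hST.2 (y := ⟨y, hST.1 y.2⟩) rfl]
  exact adjoint_isFormalAdjoint hT _ x

variable {H : Type*} [NormedAddCommGroup H] [InnerProductSpace ℝ H]

theorem real_inner_apply_self_eq_zero_of_skew {A : H →ₗ.[ℝ] H}
    (hskew : ∀ u v : A.domain, ⟪A u, (v : H)⟫ = -⟪(u : H), A v⟫) (u : A.domain) :
    ⟪A u, (u : H)⟫ = 0 := by
  linarith [hskew u u, real_inner_comm (A u) (u : H)]

theorem real_inner_neg_apply_add_apply_eq [CompleteSpace H] {A B : H →ₗ.[ℝ] H}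
    (hAdense : Dense (A.domain : Set H))
    (hskew : ∀ u v : A.domain, ⟪A u, (v : H)⟫ = -⟪(u : H), A v⟫) (hBA : B ≤ A†)
    (u₁ : A.domain) (u₂ : B.domain) :
    ⟪-(A u₁) + B u₂, (u₁ : H) + (u₂ : H)⟫ = ⟪B u₂, (u₂ : H)⟫ := by
  have hcross : ⟪B u₂, (u₁ : H)⟫ = ⟪A u₁, (u₂ : H)⟫ :=
    (isFormalAdjoint_of_le_adjoint hAdense hBA u₂ u₁).trans (real_inner_comm _ _)
  rw [inner_add_left, inner_add_right, inner_add_right, inner_neg_left, inner_neg_left,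
    real_inner_apply_self_eq_zero_of_skew hskew, hcross]
  ring

end LinearPMap

theorem tilde_extension_wellDefined_and_dissipative_general
    {H : Type*} [NormedAddCommGroup H] [InnerProductSpace ℝ H] [CompleteSpace H]
    (A B : H →ₗ.[ℝ] H) (hAdense : Dense (A.domain : Set H))
    (hskew : ∀ u v : A.domain, ⟪A u, (v : H)⟫ = -⟪(u : H), A v⟫)
    (hdiss : ∀ u : B.domain, ⟪B u, (u : H)⟫ ≤ 0)
    (hBA : B ≤ A.adjoint) (hAB : -A ≤ B) :
    (∀ (u₁ u₁' : A.domain) (u₂ u₂' : B.domain),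
        (u₁ : H) + (u₂ : H) = (u₁' : H) + (u₂' : H) →
          -(A u₁) + B u₂ = -(A u₁') + B u₂') ∧
      ∀ (u₁ : A.domain) (u₂ : B.domain),
        ⟪-(A u₁) + B u₂, (u₁ : H) + (u₂ : H)⟫ ≤ 0 := by
  refine ⟨fun u₁ u₁' u₂ u₂' h => ?_, fun u₁ u₂ => ?_⟩
  · simpa only [LinearPMap.neg_apply] using
      LinearPMap.add_apply_eq_of_le hAB (x := u₁) (x' := u₁') h
  · rw [LinearPMap.real_inner_neg_apply_add_apply_eq hAdense hskew hBA]
    exact hdiss u₂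

/-- Let `A` be a closed densely defined skew-symmetric operator on a real Hilbert space `H`, `B`
a dissipative operator with `B ⊆ A*` and `−A ⊆ B`. Then the operator `B̃` defined on
`D(A) + D(B)` by `B̃(u₁ + u₂) = −Au₁ + Bu₂` is well defined (independent of the decomposition)
and dissipative: `(B̃u, u) ≤ 0` for all `u ∈ D(A) + D(B)`. -/
theorem tilde_extension_wellDefined_and_dissipative
    {H : Type*} [NormedAddCommGroup H] [InnerProductSpace ℝ H] [CompleteSpace H]
    (A B : H →ₗ.[ℝ] H) (hAdense : Dense (A.domain : Set H)) (hAclosed : A.IsClosed)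
    (hskew : ∀ u v : A.domain, ⟪A u, (v : H)⟫ = -⟪(u : H), A v⟫)
    (hdiss : ∀ u : B.domain, ⟪B u, (u : H)⟫ ≤ 0)
    (hBA : B ≤ A.adjoint) (hAB : -A ≤ B) :
    (∀ (u₁ u₁' : A.domain) (u₂ u₂' : B.domain),
        (u₁ : H) + (u₂ : H) = (u₁' : H) + (u₂' : H) →
          -(A u₁) + B u₂ = -(A u₁') + B u₂') ∧
      ∀ (u₁ : A.domain) (u₂ : B.domain),
        ⟪-(A u₁) + B u₂, (u₁ : H) + (u₂ : H)⟫ ≤ 0 :=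
  tilde_extension_wellDefined_and_dissipative_general A B hAdense hskew hdiss hBA hAB
end

section
/- Let a : ℝⁿ → ℝⁿ be Lipschitz with constant m and linear growth |a(x)| ≤ c(1+|x|), let ψ ∈ C⁰₁(ℝⁿ) with support in the ball |x| ≤ r, and let 0 < h < 1/m. Then the function φ(y) = (1/h) ∫_{−∞}^0 e^{s/h} ψ(x(s;0,y)) ds is a well-defined continuous bounded solution of φ + h a·∇φ = ψ (along characteristics) and satisfies |φ(y)| ≤ c₁ (1+|y|)^{−α/h} with α = 1/c and c₁ = ‖ψ‖_∞ (1+r)^{α/h}. -/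
open MeasureTheory Set

/-- Let `a` be Lipschitz with constant `m` and linear growth `|a(x)| ≤ c(1+|x|)`, `ψ ∈ C¹₀(ℝⁿ)`
with support in the ball `|x| ≤ r`, `0 < h < 1/m`, and let `X` be the flow of `x' = a(x)`.
Then `φ(y) = (1/h) ∫_{−∞}^0 e^{s/h} ψ(X(s;0,y)) ds` is a continuous bounded solution of
`φ + h a·∇φ = ψ` along characteristics and satisfies
`|φ(y)| ≤ c₁ (1+|y|)^{−α/h}` with `α = 1/c` and `c₁ = ‖ψ‖_∞ (1+r)^{α/h}`. -/
theorem stationary_transport_solution_decay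
    {n : ℕ} (a : EuclideanSpace ℝ (Fin n) → EuclideanSpace ℝ (Fin n))
    (m : NNReal) (hm : 0 < (m : ℝ)) (ha : LipschitzWith m a)
    (c : ℝ) (hc : 0 < c) (hgrowth : ∀ x, ‖a x‖ ≤ c * (1 + ‖x‖))
    (ψ : EuclideanSpace ℝ (Fin n) → ℝ) (hψ : ContDiff ℝ 1 ψ) (hψc : HasCompactSupport ψ)
    (r : ℝ) (hr : 0 < r) (hψsupp : Function.support ψ ⊆ Metric.closedBall 0 r)
    (h : ℝ) (hh0 : 0 < h) (hhm : h < 1 / m)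
    (X : ℝ → EuclideanSpace ℝ (Fin n) → EuclideanSpace ℝ (Fin n))
    (hX0 : ∀ y, X 0 y = y)
    (hXd : ∀ y s, HasDerivAt (fun τ => X τ y) (a (X s y)) s)
    (φ : EuclideanSpace ℝ (Fin n) → ℝ)
    (hφ : ∀ y, φ y = (1 / h) * ∫ s in Set.Iic (0 : ℝ), Real.exp (s / h) * ψ (X s y)) :
    Continuous φ ∧ (∃ C : ℝ, ∀ y, |φ y| ≤ C) ∧
      (∀ y t, HasDerivAt (fun τ => φ (X τ y)) ((ψ (X t y) - φ (X t y)) / h) t) ∧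
      ∀ y, |φ y| ≤ ((⨆ x, |ψ x|) * (1 + r) ^ ((1 / c) / h)) * (1 + ‖y‖) ^ (-((1 / c) / h)) := by
  have hc' : c ≠ 0 := ne_of_gt hc
  have hh' : h ≠ 0 := ne_of_gt hh0
  -- continuity of the flow in time
  have hXc : ∀ y, Continuous fun s => X s y := fun y =>
    continuous_iff_continuousAt.2 fun s => (hXd y s).continuousAt
  -- sup norm bound
  obtain ⟨B, hB⟩ := hψc.exists_bound_of_continuous hψ.continuous
  set M : ℝ := ⨆ x, |ψ x| with hMdef
  have hbdd : BddAbove (Set.range fun x => |ψ x|) := ⟨B, by rintro _ ⟨x, rfl⟩; simpa using hB x⟩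
  have hMb : ∀ x, |ψ x| ≤ M := fun x => le_ciSup hbdd x
  have hM0 : 0 ≤ M := le_trans (abs_nonneg _) (hMb 0)
  -- exponential integrals
  have hexpc : Continuous fun s : ℝ => Real.exp (s / h) :=
    Real.continuous_exp.comp (continuous_id.div_const h)
  have hexpint : ∀ σ : ℝ, IntegrableOn (fun s => Real.exp (s / h)) (Iic σ) := by
    intro σ
    refine integrableOn_Iic_of_intervalIntegral_norm_bounded (h * Real.exp (σ / h)) σ
      (fun i : ℝ => hexpc.integrableOn_Ioc) Filter.tendsto_id ?_
    filter_upwards [Filter.eventually_le_atBot σ] with i hi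
    have h1 : ∀ x : ℝ, ‖Real.exp (x / h)‖ = Real.exp (x / h) := fun x =>
      Real.norm_eq_abs _ ▸ abs_of_pos (Real.exp_pos _)
    simp_rw [h1]
    rw [intervalIntegral.integral_comp_div (f := Real.exp) hh', integral_exp]
    rw [smul_eq_mul]
    have : Real.exp (σ / h) - Real.exp (i / h) ≤ Real.exp (σ / h) := by
      have := Real.exp_pos (i / h); linarith
    nlinarith [mul_pos hh0 (Real.exp_pos ((id i : ℝ) / h))]
  have hexpval : ∀ σ : ℝ, ∫ s in Iic σ, Real.exp (s / h) = h * Real.exp (σ / h) := by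
    intro σ
    have hder : ∀ x ∈ Iic σ, HasDerivAt (fun s => h * Real.exp (s / h)) (Real.exp (x / h)) x := by
      intro x _
      have h1 : HasDerivAt (fun s : ℝ => s / h) (1 / h) x := by
        simpa using (hasDerivAt_id x).div_const h
      have h2 := h1.exp
      have h3 := h2.const_mul h
      refine h3.congr_deriv ?_
      rw [mul_comm h, mul_assoc, one_div_mul_cancel hh', mul_one]
    have htend : Filter.Tendsto (fun s => h * Real.exp (s / h)) Filter.atBot (nhds 0) := by
      rw [show (0 : ℝ) = h * 0 by ring]
      exact (Real.tendsto_exp_atBot.comp (Filter.tendsto_id.atBot_div_const hh0)).const_mul h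
    have := MeasureTheory.integral_Iic_of_hasDerivAt_of_tendsto' hder (hexpint σ) htend
    rw [this]; ring
  -- continuity and integrability of the integrand
  have hcontg : ∀ y, Continuous fun s => Real.exp (s / h) * ψ (X s y) := fun y =>
    hexpc.mul (hψ.continuous.comp (hXc y))
  have hint : ∀ y (σ : ℝ), IntegrableOn (fun s => Real.exp (s / h) * ψ (X s y)) (Iic σ) := by
    intro y σ
    refine Integrable.mono ((hexpint σ).const_mul M) ((hcontg y).aestronglyMeasurable) ?_
    filter_upwards with s
    rw [norm_mul, Real.norm_eq_abs (Real.exp _), abs_of_pos (Real.exp_pos _),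
      Real.norm_eq_abs, Real.norm_eq_abs, abs_of_nonneg (mul_nonneg hM0 (Real.exp_pos _).le)]
    calc Real.exp (s / h) * |ψ (X s y)| ≤ Real.exp (s / h) * M :=
          mul_le_mul_of_nonneg_left (hMb _) (Real.exp_pos _).le
      _ = M * Real.exp (s / h) := mul_comm _ _
  -- two-sided uniqueness of solutions
  have huniq : ∀ (f g : ℝ → EuclideanSpace ℝ (Fin n)),
      (∀ t, HasDerivAt f (a (f t)) t) → (∀ t, HasDerivAt g (a (g t)) t) →
      f 0 = g 0 → ∀ t, f t = g t := by
    intro f g hf hg h0 t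
    have hfc : Continuous f := continuous_iff_continuousAt.2 fun u => (hf u).continuousAt
    have hgc : Continuous g := continuous_iff_continuousAt.2 fun u => (hg u).continuousAt
    rcases le_or_gt 0 t with ht | ht
    · exact ODE_solution_unique (v := fun _ => a) (fun _ => ha) hfc.continuousOn
        (fun u _ => (hf u).hasDerivWithinAt) hgc.continuousOn
        (fun u _ => (hg u).hasDerivWithinAt) h0 (Set.mem_Icc.mpr ⟨ht, le_refl t⟩)
    · have hF : ∀ u : ℝ, HasDerivAt (fun τ => f (-τ)) (-(a (f (-u)))) u := by
        intro u
        have := HasDerivAt.scomp_of_eq u (hf (-u)) (hasDerivAt_neg u) rfl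
        rw [neg_one_smul] at this; exact this
      have hG : ∀ u : ℝ, HasDerivAt (fun τ => g (-τ)) (-(a (g (-u)))) u := by
        intro u
        have := HasDerivAt.scomp_of_eq u (hg (-u)) (hasDerivAt_neg u) rfl
        rw [neg_one_smul] at this; exact this
      have key := ODE_solution_unique (v := fun _ x => -(a x)) (fun _ => ha.neg)
        (f := fun τ => f (-τ)) (g := fun τ => g (-τ)) (a := 0) (b := -t)
        (hfc.comp continuous_neg).continuousOn
        (fun u _ => (hF u).hasDerivWithinAt)
        (hgc.comp continuous_neg).continuousOn
        (fun u _ => (hG u).hasDerivWithinAt)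
        (by simpa using h0)
      have := key (Set.mem_Icc.mpr ⟨by linarith, le_refl (-t)⟩)
      simpa using this
  have hsemi : ∀ y t s, X s (X t y) = X (s + t) y := by
    intro y t s
    refine huniq (fun s => X s (X t y)) (fun s => X (s + t) y) (hXd (X t y)) ?_ ?_ s
    · intro u
      have h1 : HasDerivAt (fun s : ℝ => s + t) 1 u := (hasDerivAt_id u).add_const t
      have h2 := HasDerivAt.scomp_of_eq u (hXd y (u + t)) h1 rfl
      rw [one_smul] at h2; exact h2
    · show X 0 (X t y) = X (0 + t) y
      rw [hX0, zero_add]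
  -- Lipschitz continuity of the flow in space
  have hflow : ∀ (s : ℝ) (y z : EuclideanSpace ℝ (Fin n)),
      dist (X s y) (X s z) ≤ dist y z * Real.exp (m * |s|) := by
    intro s y z
    rcases le_or_gt 0 s with hs | hs
    · have key := dist_le_of_trajectories_ODE (v := fun _ => a) (fun _ => ha)
        (f := fun τ => X τ y) (g := fun τ => X τ z) (a := 0) (b := s) (δ := dist y z)
        (hXc y).continuousOn (fun u _ => (hXd y u).hasDerivWithinAt)
        (hXc z).continuousOn (fun u _ => (hXd z u).hasDerivWithinAt)
        (by simp [hX0]) s (Set.mem_Icc.mpr ⟨hs, le_refl s⟩)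
      simpa [abs_of_nonneg hs] using key
    · have hF : ∀ (w : EuclideanSpace ℝ (Fin n)) (u : ℝ),
          HasDerivAt (fun τ => X (-τ) w) (-(a (X (-u) w))) u := by
        intro w u
        have := HasDerivAt.scomp_of_eq u (hXd w (-u)) (hasDerivAt_neg u) rfl
        rw [neg_one_smul] at this; exact this
      have key := dist_le_of_trajectories_ODE (v := fun _ x => -(a x)) (fun _ => ha.neg)
        (f := fun τ => X (-τ) y) (g := fun τ => X (-τ) z) (a := 0) (b := -s) (δ := dist y z)
        ((hXc y).comp continuous_neg).continuousOn (fun u _ => (hF y u).hasDerivWithinAt)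
        ((hXc z).comp continuous_neg).continuousOn (fun u _ => (hF z u).hasDerivWithinAt)
        (by simp [hX0]) (-s) (Set.mem_Icc.mpr ⟨by linarith, le_refl (-s)⟩)
      simp only [neg_neg, sub_zero] at key
      simpa [abs_of_neg hs] using key
  have hXyc : ∀ s : ℝ, Continuous fun y => X s y := by
    intro s
    refine LipschitzWith.continuous (K := ⟨Real.exp (m * |s|), (Real.exp_pos _).le⟩) ?_
    exact LipschitzWith.of_dist_le_mul fun y z => by
      exact (hflow s y z).trans_eq (mul_comm _ _)
  -- growth bound backward in time
  have hgrow : ∀ (y : EuclideanSpace ℝ (Fin n)) (s : ℝ), s ≤ 0 →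
      (1 + ‖y‖) * Real.exp (c * s) ≤ 1 + ‖X s y‖ := by
    intro y s hs
    have key := norm_le_gronwallBound_of_norm_deriv_right_le (f := fun τ => X τ y)
      (f' := fun τ => a (X τ y)) (δ := ‖X s y‖) (K := c) (ε := c) (a := s) (b := 0)
      (hXc y).continuousOn (fun u _ => (hXd y u).hasDerivWithinAt) le_rfl
      (fun u _ => by have := hgrowth (X u y); linarith) 0 (Set.mem_Icc.mpr ⟨hs, le_refl (0:ℝ)⟩)
    simp only [hX0] at key
    rw [gronwallBound_of_K_ne_0 hc', div_self hc'] at key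
    simp only [one_mul] at key
    have hE : (0:ℝ) < Real.exp (c * s) := Real.exp_pos _
    have hinv : Real.exp (c * (0 - s)) = (Real.exp (c * s))⁻¹ := by
      rw [← Real.exp_neg]; ring_nf
    rw [hinv] at key
    nlinarith [mul_le_mul_of_nonneg_right key hE.le,
      mul_inv_cancel₀ (ne_of_gt hE), norm_nonneg (X s y)]
  -- decay bound
  have hdecay : ∀ y, |φ y| ≤ M * Real.exp ((min ((1 / c) * Real.log ((1 + r) / (1 + ‖y‖))) 0) / h) := by
    intro y
    have hy0 : (0:ℝ) < 1 + ‖y‖ := by positivity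
    have hq0 : (0:ℝ) < (1 + r) / (1 + ‖y‖) := div_pos (by linarith) hy0
    set s0 : ℝ := (1 / c) * Real.log ((1 + r) / (1 + ‖y‖)) with hs0
    set s1 : ℝ := min s0 0 with hs1
    have hs1le : s1 ≤ 0 := min_le_right _ _
    have hvanish : ∀ s ∈ Ioc s1 (0:ℝ), Real.exp (s / h) * ψ (X s y) = 0 := by
      intro s hs
      obtain ⟨hs1lt, hsle⟩ := hs
      by_contra hne
      have hψne : ψ (X s y) ≠ 0 := fun h0 => hne (by rw [h0, mul_zero])
      have hXr : ‖X s y‖ ≤ r := by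
        have := hψsupp (Function.mem_support.2 hψne)
        simpa [Metric.mem_closedBall, dist_zero_right] using this
      have hg := hgrow y s hsle
      have hEq : Real.exp (c * s) ≤ (1 + r) / (1 + ‖y‖) := by
        rw [le_div_iff₀ hy0]
        nlinarith
      have hlog : c * s ≤ Real.log ((1 + r) / (1 + ‖y‖)) :=
        (Real.le_log_iff_exp_le hq0).2 hEq
      have hss0 : s ≤ s0 := by
        rw [hs0]
        calc s = (1/c) * (c * s) := by field_simp
          _ ≤ (1/c) * Real.log ((1 + r) / (1 + ‖y‖)) :=
            mul_le_mul_of_nonneg_left hlog (by positivity)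
      exact absurd hs1lt (not_lt.2 (le_min hss0 hsle))
    have hsplit : ∫ s in Iic (0:ℝ), Real.exp (s / h) * ψ (X s y)
        = ∫ s in Iic s1, Real.exp (s / h) * ψ (X s y) := by
      have hd := intervalIntegral.integral_Iic_sub_Iic (hint y s1) (hint y 0)
      have hz : ∫ s in s1..(0:ℝ), Real.exp (s / h) * ψ (X s y) = 0 := by
        rw [intervalIntegral.integral_of_le hs1le]
        exact setIntegral_eq_zero_of_forall_eq_zero hvanish
      linarith
    rw [hφ y, hsplit, abs_mul, abs_of_pos (by positivity : (0:ℝ) < 1/h)]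
    have hb : |∫ s in Iic s1, Real.exp (s / h) * ψ (X s y)| ≤ M * (h * Real.exp (s1 / h)) := by
      rw [← Real.norm_eq_abs]
      calc ‖∫ s in Iic s1, Real.exp (s / h) * ψ (X s y)‖
          ≤ ∫ s in Iic s1, M * Real.exp (s / h) := by
            refine norm_integral_le_of_norm_le ((hexpint s1).const_mul M) ?_
            filter_upwards with s
            rw [Real.norm_eq_abs, abs_mul, abs_of_pos (Real.exp_pos _)]
            calc Real.exp (s / h) * |ψ (X s y)| ≤ Real.exp (s / h) * M :=
                  mul_le_mul_of_nonneg_left (hMb _) (Real.exp_pos _).le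
              _ = M * Real.exp (s / h) := mul_comm _ _
        _ = M * (h * Real.exp (s1 / h)) := by rw [integral_const_mul, hexpval s1]
    calc (1/h) * |∫ s in Iic s1, Real.exp (s / h) * ψ (X s y)|
        ≤ (1/h) * (M * (h * Real.exp (s1 / h))) :=
          mul_le_mul_of_nonneg_left hb (by positivity)
      _ = M * Real.exp (s1 / h) := by field_simp
  refine ⟨?_, ⟨M, ?_⟩, ?_, ?_⟩
  · -- continuity
    have hφfun : φ = fun y => (1/h) * ∫ s in Iic (0:ℝ), Real.exp (s/h) * ψ (X s y) := funext hφ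
    rw [hφfun]
    refine continuous_const.mul ?_
    rw [continuous_iff_continuousAt]
    intro y0
    refine continuousAt_of_dominated (F := fun y s => Real.exp (s/h) * ψ (X s y))
      (bound := fun s => M * Real.exp (s/h)) ?_ ?_ ((hexpint 0).const_mul M) ?_
    · filter_upwards with y
      exact (hcontg y).aestronglyMeasurable
    · filter_upwards with y
      filter_upwards with s
      rw [Real.norm_eq_abs, abs_mul, abs_of_pos (Real.exp_pos _)]
      calc Real.exp (s / h) * |ψ (X s y)| ≤ Real.exp (s / h) * M :=
            mul_le_mul_of_nonneg_left (hMb _) (Real.exp_pos _).le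
        _ = M * Real.exp (s / h) := mul_comm _ _
    · filter_upwards with s
      exact (continuous_const.mul (hψ.continuous.comp (hXyc s))).continuousAt
  · -- boundedness
    intro y
    refine (hdecay y).trans ?_
    have : Real.exp ((min ((1 / c) * Real.log ((1 + r) / (1 + ‖y‖))) 0) / h) ≤ 1 := by
      rw [show (1:ℝ) = Real.exp 0 from (Real.exp_zero).symm]
      apply Real.exp_le_exp.2
      exact div_nonpos_of_nonpos_of_nonneg (min_le_right _ _) hh0.le
    nlinarith
  · -- derivative along characteristics
    intro y t
    set g : ℝ → ℝ := fun u => Real.exp (u / h) * ψ (X u y) with hgdef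
    set G : ℝ → ℝ := fun τ => ∫ u in Iic τ, g u with hGdef
    have htrans : ∀ τ : ℝ, ∫ s in Iic (0:ℝ), g (s + τ) = G τ := by
      intro τ
      have hpre : (fun x : ℝ => x + τ) ⁻¹' (Iic τ) = Iic (0:ℝ) := by ext x; simp
      rw [hGdef]
      simp only []
      rw [← hpre]
      exact (measurePreserving_add_right volume τ).setIntegral_preimage_emb
        (MeasurableEquiv.addRight τ).measurableEmbedding g (Iic τ)
    have hkey : ∀ τ, φ (X τ y) = (1/h) * (Real.exp (-τ/h) * G τ) := by
      intro τ
      rw [hφ (X τ y)]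
      congr 1
      calc ∫ s in Iic (0:ℝ), Real.exp (s/h) * ψ (X s (X τ y))
          = ∫ s in Iic (0:ℝ), Real.exp (-τ/h) * g (s + τ) := by
            refine setIntegral_congr_fun measurableSet_Iic fun s _ => ?_
            rw [hsemi y τ s, hgdef]
            simp only []
            rw [← mul_assoc, ← Real.exp_add]
            congr 2
            field_simp
            ring
        _ = Real.exp (-τ/h) * ∫ s in Iic (0:ℝ), g (s + τ) := integral_const_mul _ _
        _ = Real.exp (-τ/h) * G τ := by rw [htrans]
    have hG' : ∀ τ, HasDerivAt G (g τ) τ := by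
      intro τ
      have heq : ∀ σ : ℝ, G σ = G 0 + ∫ u in (0:ℝ)..σ, g u := by
        intro σ
        have hd := intervalIntegral.integral_Iic_sub_Iic (hint y 0) (hint y σ)
        rw [hGdef, hgdef]
        simp only []
        linarith
      have hd : HasDerivAt (fun σ => G 0 + ∫ u in (0:ℝ)..σ, g u) (g τ) τ :=
        HasDerivAt.const_add _ (intervalIntegral.integral_hasDerivAt_right
          ((hcontg y).intervalIntegrable _ _)
          ((hcontg y).stronglyMeasurable.stronglyMeasurableAtFilter)
          ((hcontg y).continuousAt))
      exact hd.congr_of_eventuallyEq (Filter.Eventually.of_forall heq)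
    have he : HasDerivAt (fun τ : ℝ => Real.exp (-τ/h)) (Real.exp (-t/h) * (-1/h)) t := by
      have h1 : HasDerivAt (fun τ : ℝ => -τ/h) (-1/h) t := by
        simpa using (hasDerivAt_id t).neg.div_const h
      simpa using h1.exp
    have hprod := (he.mul (hG' t)).const_mul (1/h)
    have hmain : HasDerivAt (fun τ => (1/h) * (Real.exp (-τ/h) * G τ))
        ((ψ (X t y) - φ (X t y)) / h) t := by
      refine hprod.congr_deriv ?_
      have hcan : Real.exp (-t/h) * Real.exp (t/h) = 1 := by
        rw [← Real.exp_add, show -t/h + t/h = 0 by ring]; exact Real.exp_zero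
      have hg2 : Real.exp (-t/h) * (Real.exp (t/h) * ψ (X t y)) = ψ (X t y) := by
        rw [← mul_assoc, hcan, one_mul]
      rw [hkey t, hgdef]
      simp only []
      rw [hg2]
      ring
    exact hmain.congr_of_eventuallyEq (Filter.Eventually.of_forall fun τ => hkey τ)
  · -- decay
    intro y
    refine (hdecay y).trans ?_
    have hy0 : (0:ℝ) < 1 + ‖y‖ := by positivity
    have hq0 : (0:ℝ) < (1 + r) / (1 + ‖y‖) := div_pos (by linarith) hy0
    have h1 : Real.exp ((min ((1 / c) * Real.log ((1 + r) / (1 + ‖y‖))) 0) / h)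
        ≤ Real.exp (((1 / c) * Real.log ((1 + r) / (1 + ‖y‖))) / h) :=
      Real.exp_le_exp.2 ((div_le_div_iff_of_pos_right hh0).2 (min_le_left _ _))
    have h2 : Real.exp (((1 / c) * Real.log ((1 + r) / (1 + ‖y‖))) / h)
        = ((1 + r) / (1 + ‖y‖)) ^ ((1 / c) / h) := by
      rw [Real.rpow_def_of_pos hq0]
      congr 1
      field_simp
    have h3 : ((1 + r) / (1 + ‖y‖)) ^ ((1 / c) / h)
        = (1 + r) ^ ((1 / c) / h) * (1 + ‖y‖) ^ (-((1 / c) / h)) := by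
      rw [Real.div_rpow (by linarith) hy0.le, Real.rpow_neg hy0.le, div_eq_mul_inv]
    calc M * Real.exp ((min ((1 / c) * Real.log ((1 + r) / (1 + ‖y‖))) 0) / h)
        ≤ M * Real.exp (((1 / c) * Real.log ((1 + r) / (1 + ‖y‖))) / h) :=
          mul_le_mul_of_nonneg_left h1 hM0
      _ = M * ((1 + r) ^ ((1 / c) / h) * (1 + ‖y‖) ^ (-((1 / c) / h))) := by rw [h2, h3]
      _ = (M * (1 + r) ^ ((1 / c) / h)) * (1 + ‖y‖) ^ (-((1 / c) / h)) := by ring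
end

section
/- Under the hypotheses of the previous lemma, the gradient of φ exists almost everywhere and satisfies |∇φ(y)| ≤ c₂ (1+|y|)^{−α(1/h − m)} with α = 1/c and c₂ = ‖∇ψ‖_∞ (1−mh)^{-1} (1+r)^{α(1/h−m)}. -/
open MeasureTheory

open Real Set Filter

lemma expIic_hasDeriv (β : ℝ) (hβ : β ≠ 0) (x : ℝ) :
    HasDerivAt (fun s => Real.exp (β * s) / β) (Real.exp (β * x)) x := by
  have h1 : HasDerivAt (fun s : ℝ => β * s) β x := by
    simpa using (hasDerivAt_id x).const_mul β
  have h2 := (Real.hasDerivAt_exp (β * x)).comp x h1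
  convert h2.div_const β using 1
  · rfl
  · rfl
  · rfl
  field_simp

lemma expIic_integrable {β : ℝ} (hβ : 0 < β) (t : ℝ) :
    IntegrableOn (fun s => Real.exp (β * s)) (Set.Iic t) := by
  have hcont : Continuous fun s : ℝ => Real.exp (β * s) :=
    Real.continuous_exp.comp (continuous_const.mul continuous_id)
  apply integrableOn_Iic_of_intervalIntegral_norm_bounded (Real.exp (β * t) / β) t
    (fun i => hcont.integrableOn_Ioc) tendsto_id
  filter_upwards with i
  simp only [id_eq]
  have hInt : ∫ x in i..t, ‖Real.exp (β * x)‖ = Real.exp (β * t)/β - Real.exp (β * i)/β := by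
    simp_rw [Real.norm_eq_abs, abs_of_pos (Real.exp_pos _)]
    exact intervalIntegral.integral_eq_sub_of_hasDerivAt
      (fun x _ => expIic_hasDeriv β hβ.ne' x) (hcont.intervalIntegrable _ _)
  rw [hInt]
  have := (Real.exp_pos (β * i)).le
  have hβ' := hβ
  have : 0 ≤ Real.exp (β * i) / β := by positivity
  linarith

lemma expIic_integral {β : ℝ} (hβ : 0 < β) (t : ℝ) :
    ∫ s in Set.Iic t, Real.exp (β * s) = Real.exp (β * t) / β := by
  have htend : Tendsto (fun s => Real.exp (β * s) / β) atBot (nhds 0) := by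
    have h1 : Tendsto (fun s : ℝ => β * s) atBot atBot :=
      tendsto_id.const_mul_atBot hβ
    have := (Real.tendsto_exp_atBot.comp h1).div_const β
    simpa using this
  have := integral_Iic_of_hasDerivAt_of_tendsto' (a := t)
    (fun x _ => expIic_hasDeriv β hβ.ne' x) (expIic_integrable hβ t) htend
  rw [this]; ring

variable {n : ℕ}

local notation "E" => EuclideanSpace ℝ (Fin n)

lemma flow_lipschitz {a : E → E} {m : NNReal} (ha : LipschitzWith m a)
    {X : ℝ → E → E} (hX0 : ∀ y, X 0 y = y)
    (hXd : ∀ y s, HasDerivAt (fun τ => X τ y) (a (X s y)) s)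
    (y₁ y₂ : E) {s : ℝ} (hs : s ≤ 0) :
    ‖X s y₁ - X s y₂‖ ≤ ‖y₁ - y₂‖ * Real.exp ((m : ℝ) * (-s)) := by
  set g : ℝ → E := fun t => X (-t) y₁ - X (-t) y₂ with hg
  have hgd : ∀ t, HasDerivAt g (-(a (X (-t) y₁) - a (X (-t) y₂))) t := by
    intro t
    have h1 : HasDerivAt (fun t : ℝ => X (-t) y₁) ((-1 : ℝ) • a (X (-t) y₁)) t :=
      (hXd y₁ (-t)).scomp t (hasDerivAt_neg t)
    have h2 : HasDerivAt (fun t : ℝ => X (-t) y₂) ((-1 : ℝ) • a (X (-t) y₂)) t :=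
      (hXd y₂ (-t)).scomp t (hasDerivAt_neg t)
    have := h1.sub h2
    refine this.congr_deriv ?_
    simp [neg_sub, smul_sub]
    abel
  have hmain := norm_le_gronwallBound_of_norm_deriv_right_le (f := g)
    (f' := fun t => -(a (X (-t) y₁) - a (X (-t) y₂))) (δ := ‖y₁ - y₂‖) (K := (m : ℝ))
    (ε := 0) (a := 0) (b := -s)
    (fun t _ => (hgd t).continuousAt.continuousWithinAt)
    (fun t _ => (hgd t).hasDerivWithinAt)
    (by simp [hg, hX0])
    (by
      intro t _
      rw [norm_neg]
      have := ha.dist_le_mul (X (-t) y₁) (X (-t) y₂)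
      rw [dist_eq_norm, dist_eq_norm] at this
      simpa [hg] using this)
  have := hmain (-s) ⟨by linarith, le_rfl⟩
  simpa [hg, gronwallBound_ε0] using this

lemma flow_growth {a : E → E} {c : ℝ} (hc : 0 < c) (hgrowth : ∀ x, ‖a x‖ ≤ c * (1 + ‖x‖))
    {X : ℝ → E → E} (hX0 : ∀ y, X 0 y = y)
    (hXd : ∀ y s, HasDerivAt (fun τ => X τ y) (a (X s y)) s)
    (y : E) {s : ℝ} (hs : s ≤ 0) :
    (1 + ‖y‖) * Real.exp (c * s) ≤ 1 + ‖X s y‖ := by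
  have hmain := norm_le_gronwallBound_of_norm_deriv_right_le (f := fun t => X t y)
    (f' := fun t => a (X t y)) (δ := ‖X s y‖) (K := c) (ε := c) (a := s) (b := 0)
    (fun t _ => (hXd y t).continuousAt.continuousWithinAt)
    (fun t _ => (hXd y t).hasDerivWithinAt)
    le_rfl
    (by
      intro t _
      have := hgrowth (X t y)
      linarith [hgrowth (X t y)])
  have h0 := hmain 0 ⟨hs, le_rfl⟩
  rw [hX0 y, gronwallBound_of_K_ne_0 hc.ne'] at h0
  simp only [zero_sub, div_self hc.ne'] at h0
  set e := Real.exp (c * s) with he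
  have hepos : 0 < e := Real.exp_pos _
  have hinv : Real.exp (c * -s) = e⁻¹ := by
    rw [he, ← Real.exp_neg]; ring_nf
  rw [hinv] at h0
  -- h0 : ‖y‖ ≤ ‖X s y‖ * e⁻¹ + 1 * (e⁻¹ - 1)
  have hee : e * e⁻¹ = 1 := mul_inv_cancel₀ hepos.ne'
  nlinarith [norm_nonneg (X s y), h0]

lemma phi_key {a : E → E} {m : NNReal} (hm : 0 < (m : ℝ)) (ha : LipschitzWith m a)
    {c : ℝ} (hc : 0 < c) (hgrowth : ∀ x, ‖a x‖ ≤ c * (1 + ‖x‖))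
    {ψ : E → ℝ} {S Mψ : ℝ} (hS0 : 0 ≤ S)
    (hψlip : ∀ u v : E, ‖ψ u - ψ v‖ ≤ S * ‖u - v‖) (hMψ : ∀ x, ‖ψ x‖ ≤ Mψ)
    {r : ℝ} (hr : 0 < r) (hψsupp : Function.support ψ ⊆ Metric.closedBall 0 r)
    {h : ℝ} (hh0 : 0 < h) (hm1 : 0 < 1 - (m : ℝ) * h)
    {X : ℝ → E → E} (hX0 : ∀ y, X 0 y = y)
    (hXd : ∀ y s, HasDerivAt (fun τ => X τ y) (a (X s y)) s)
    {φ : E → ℝ}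
    (hφ : ∀ y, φ y = (1 / h) * ∫ s in Set.Iic (0 : ℝ), Real.exp (s / h) * ψ (X s y))
    (y₁ y₂ : E) :
    |φ y₁ - φ y₂| ≤ (S / (1 - m * h) * (1 + r) ^ ((1/c) * (1/h - m))) *
      (1 + min ‖y₁‖ ‖y₂‖) ^ (-((1/c) * (1/h - m))) * ‖y₁ - y₂‖ := by
  have hβ : 0 < 1/h - (m : ℝ) := by
    have : 1/h - (m : ℝ) = (1 - m * h) / h := by field_simp
    rw [this]; positivity
  set β := 1/h - (m : ℝ) with hβdef
  set κ := (1/c) * β with hκdef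
  have hκ0 : 0 ≤ κ := by positivity
  have hXc : ∀ y : E, Continuous fun s => X s y := fun y =>
    continuous_iff_continuousAt.2 fun s => (hXd y s).continuousAt
  have hMψ0 : 0 ≤ Mψ := (norm_nonneg _).trans (hMψ 0)
  have hψcont : Continuous ψ := by
    have : LipschitzWith ⟨S, hS0⟩ ψ := LipschitzWith.of_dist_le_mul fun u v => by
      rw [Real.dist_eq, dist_eq_norm]; exact hψlip u v
    exact this.continuous
  -- integrability
  have hInt : ∀ y : E, IntegrableOn (fun s => Real.exp (s / h) * ψ (X s y)) (Set.Iic 0) := by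
    intro y
    have hbd : IntegrableOn (fun s => Mψ * Real.exp ((1/h) * s)) (Set.Iic 0) :=
      (expIic_integrable (by positivity) 0).const_mul Mψ
    apply Integrable.mono' hbd
    · exact ((Real.continuous_exp.comp (continuous_id.div_const h)).mul
        (hψcont.comp (hXc y))).aestronglyMeasurable
    · filter_upwards with s
      have : ‖Real.exp (s / h) * ψ (X s y)‖ = Real.exp (s / h) * ‖ψ (X s y)‖ := by
        rw [norm_mul, Real.norm_eq_abs, abs_of_pos (Real.exp_pos _)]
      rw [this, show (1/h) * s = s / h by ring]
      have := hMψ (X s y)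
      nlinarith [Real.exp_pos (s / h), hMψ (X s y), norm_nonneg (ψ (X s y))]
  -- main estimate
  set R := min ‖y₁‖ ‖y₂‖ with hRdef
  have hR0 : 0 ≤ R := le_min (norm_nonneg _) (norm_nonneg _)
  set q := (1 + r) / (1 + R) with hqdef
  have hq0 : 0 < q := by positivity
  set s₀ := (1/c) * Real.log q with hs₀def
  set t₀ := min s₀ 0 with ht₀def
  have ht₀0 : t₀ ≤ 0 := min_le_right _ _
  set F : ℝ → ℝ := fun s => Real.exp (s / h) * ψ (X s y₁) - Real.exp (s / h) * ψ (X s y₂)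
    with hFdef
  have hvan : ∀ s ∈ Set.Ioc t₀ 0, F s = 0 := by
    intro s hs
    have hs0 : s ≤ 0 := hs.2
    have hss₀ : s₀ < s := by
      rcases le_or_gt 0 s₀ with h' | h'
      · exfalso
        have : t₀ = 0 := min_eq_right h'
        rw [this] at hs
        exact absurd hs.1 (not_lt.2 hs.2)
      · have : t₀ = s₀ := min_eq_left h'.le
        rw [this] at hs; exact hs.1
    have hq' : Real.log q < c * s := by
      have := (mul_lt_mul_iff_right₀ hc).2 hss₀
      calc Real.log q = c * ((1/c) * Real.log q) := by field_simp
        _ < c * s := this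
    have hexp : 1 + r < (1 + R) * Real.exp (c * s) := by
      have h2 := Real.exp_lt_exp.2 hq'
      rw [Real.exp_log hq0] at h2
      rw [hqdef, div_lt_iff₀ (by positivity)] at h2
      linarith [h2]
    have hz : ∀ y : E, R ≤ ‖y‖ → ψ (X s y) = 0 := by
      intro y hy
      have hgr := flow_growth hc hgrowth hX0 hXd y hs0
      have hrlt : r < ‖X s y‖ := by nlinarith [Real.exp_pos (c * s)]
      by_contra hne
      have hmem := hψsupp (Function.mem_support.2 hne)
      rw [Metric.mem_closedBall, dist_zero_right] at hmem
      linarith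
    simp only [hFdef, hz y₁ (min_le_left _ _), hz y₂ (min_le_right _ _), mul_zero, sub_zero,
      sub_self]
  have hf₁ := hInt y₁
  have hf₂ := hInt y₂
  have hFint : IntegrableOn F (Set.Iic 0) := hf₁.sub hf₂
  have hsplit : ∫ s in Set.Iic 0, F s = ∫ s in Set.Iic t₀, F s := by
    rw [← Set.Iic_union_Ioc_eq_Iic ht₀0,
      setIntegral_union (Set.Iic_disjoint_Ioc le_rfl) measurableSet_Ioc
        (hFint.mono_set (Set.Iic_subset_Iic.2 ht₀0))
        (hFint.mono_set Set.Ioc_subset_Iic_self),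
      setIntegral_eq_zero_of_forall_eq_zero hvan, add_zero]
  have hptwise : ∀ s ∈ Set.Iic t₀, ‖F s‖ ≤ S * ‖y₁ - y₂‖ * Real.exp (β * s) := by
    intro s hs
    have hs0 : s ≤ 0 := le_trans hs ht₀0
    have hF : ‖F s‖ = Real.exp (s / h) * ‖ψ (X s y₁) - ψ (X s y₂)‖ := by
      rw [hFdef]
      simp only [← mul_sub]
      rw [norm_mul, Real.norm_eq_abs, abs_of_pos (Real.exp_pos _)]
    rw [hF]
    have h1 := hψlip (X s y₁) (X s y₂)
    have h2 := flow_lipschitz ha hX0 hXd y₁ y₂ hs0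
    have h3 : ‖ψ (X s y₁) - ψ (X s y₂)‖ ≤ S * (‖y₁ - y₂‖ * Real.exp ((m:ℝ) * (-s))) := by
      calc ‖ψ (X s y₁) - ψ (X s y₂)‖ ≤ S * ‖X s y₁ - X s y₂‖ := h1
        _ ≤ S * (‖y₁ - y₂‖ * Real.exp ((m:ℝ) * (-s))) := by
            apply mul_le_mul_of_nonneg_left h2 hS0
    calc Real.exp (s / h) * ‖ψ (X s y₁) - ψ (X s y₂)‖
        ≤ Real.exp (s / h) * (S * (‖y₁ - y₂‖ * Real.exp ((m:ℝ) * (-s)))) := by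
          apply mul_le_mul_of_nonneg_left h3 (Real.exp_pos _).le
      _ = S * ‖y₁ - y₂‖ * (Real.exp (s / h) * Real.exp ((m:ℝ) * (-s))) := by ring
      _ = S * ‖y₁ - y₂‖ * Real.exp (β * s) := by
          rw [← Real.exp_add]
          congr 1
          rw [hβdef]
          field_simp
          ring
  have hgint : IntegrableOn (fun s => S * ‖y₁ - y₂‖ * Real.exp (β * s)) (Set.Iic t₀) :=
    (expIic_integrable hβ t₀).const_mul _
  have hbound : ‖∫ s in Set.Iic t₀, F s‖ ≤ S * ‖y₁ - y₂‖ * (Real.exp (β * t₀) / β) := by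
    have h1 : ‖∫ s in Set.Iic t₀, F s‖ ≤ ∫ s in Set.Iic t₀, S * ‖y₁ - y₂‖ * Real.exp (β * s) := by
      apply norm_integral_le_of_norm_le hgint
      filter_upwards [ae_restrict_mem measurableSet_Iic] with s hs
      exact hptwise s hs
    rw [integral_const_mul, expIic_integral hβ t₀] at h1
    exact h1
  have hq_rpow : Real.exp (β * s₀) = (1 + r) ^ κ * (1 + R) ^ (-κ) := by
    have h1 : β * s₀ = Real.log q * κ := by rw [hs₀def, hκdef]; ring
    rw [h1, ← Real.rpow_def_of_pos hq0]
    rw [hqdef, Real.div_rpow (by positivity) (by positivity),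
      Real.rpow_neg (by positivity : (0:ℝ) ≤ 1 + R), div_eq_mul_inv]
  have hfinal : |φ y₁ - φ y₂| ≤ (1/h) * (S * ‖y₁ - y₂‖ * (Real.exp (β * s₀) / β)) := by
    have hdiff : φ y₁ - φ y₂ = (1/h) * ∫ s in Set.Iic 0, F s := by
      rw [hφ y₁, hφ y₂, ← mul_sub, ← integral_sub hf₁ hf₂]
    rw [hdiff, hsplit, abs_mul, abs_of_pos (by positivity : (0:ℝ) < 1/h)]
    apply mul_le_mul_of_nonneg_left _ (by positivity : (0:ℝ) ≤ 1/h)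
    calc |∫ s in Set.Iic t₀, F s| ≤ S * ‖y₁ - y₂‖ * (Real.exp (β * t₀) / β) := hbound
      _ ≤ S * ‖y₁ - y₂‖ * (Real.exp (β * s₀) / β) := by
          apply mul_le_mul_of_nonneg_left _ (by positivity)
          gcongr
          exact min_le_left _ _
  have hhb : h * β = 1 - (m : ℝ) * h := by rw [hβdef]; field_simp
  have hεq : (1/h) * (S * ‖y₁ - y₂‖ * (Real.exp (β * s₀) / β)) =
      (S / (1 - m * h) * (1 + r) ^ κ) * (1 + R) ^ (-κ) * ‖y₁ - y₂‖ := by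
    rw [hq_rpow, ← hhb]
    field_simp
  rw [hεq] at hfinal
  exact hfinal

/-- Under the hypotheses of the previous lemma, the gradient of
`φ(y) = (1/h) ∫_{−∞}^0 e^{s/h} ψ(X(s;0,y)) ds` exists almost everywhere and satisfies
`|∇φ(y)| ≤ c₂ (1+|y|)^{−α(1/h−m)}` with `α = 1/c` and
`c₂ = ‖∇ψ‖_∞ (1−mh)⁻¹ (1+r)^{α(1/h−m)}`. -/
theorem stationary_transport_solution_gradient_decay
    {n : ℕ} (a : EuclideanSpace ℝ (Fin n) → EuclideanSpace ℝ (Fin n))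
    (m : NNReal) (hm : 0 < (m : ℝ)) (ha : LipschitzWith m a)
    (c : ℝ) (hc : 0 < c) (hgrowth : ∀ x, ‖a x‖ ≤ c * (1 + ‖x‖))
    (ψ : EuclideanSpace ℝ (Fin n) → ℝ) (hψ : ContDiff ℝ 1 ψ) (hψc : HasCompactSupport ψ)
    (r : ℝ) (hr : 0 < r) (hψsupp : Function.support ψ ⊆ Metric.closedBall 0 r)
    (h : ℝ) (hh0 : 0 < h) (hhm : h < 1 / m)
    (X : ℝ → EuclideanSpace ℝ (Fin n) → EuclideanSpace ℝ (Fin n))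
    (hX0 : ∀ y, X 0 y = y)
    (hXd : ∀ y s, HasDerivAt (fun τ => X τ y) (a (X s y)) s)
    (φ : EuclideanSpace ℝ (Fin n) → ℝ)
    (hφ : ∀ y, φ y = (1 / h) * ∫ s in Set.Iic (0 : ℝ), Real.exp (s / h) * ψ (X s y)) :
    ∀ᵐ y ∂(volume : Measure (EuclideanSpace ℝ (Fin n))),
      ∃ D : EuclideanSpace ℝ (Fin n) →L[ℝ] ℝ, HasFDerivAt φ D y ∧
        ‖D‖ ≤ ((⨆ x, ‖fderiv ℝ ψ x‖) / (1 - m * h) * (1 + r) ^ ((1 / c) * (1 / h - m))) *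
          (1 + ‖y‖) ^ (-((1 / c) * (1 / h - m))) := by
  have hm1 : 0 < 1 - (m : ℝ) * h := by
    have h1 : (m : ℝ) * h < 1 := by
      rw [lt_div_iff₀ hm] at hhm
      linarith [hhm]
    linarith
  have hβ : 0 < 1/h - (m : ℝ) := by
    have heq : 1/h - (m : ℝ) = (1 - m * h) / h := by field_simp
    rw [heq]; positivity
  set β := 1/h - (m : ℝ) with hβdef
  set κ := (1/c) * β with hκdef
  have hκ0 : 0 ≤ κ := by positivity
  set S := ⨆ x, ‖fderiv ℝ ψ x‖ with hSdef
  obtain ⟨C₀, hC₀⟩ := (hψc.fderiv ℝ).exists_bound_of_continuous (hψ.continuous_fderiv one_ne_zero)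
  have hSb : ∀ x, ‖fderiv ℝ ψ x‖ ≤ S := by
    intro x
    apply le_ciSup (f := fun x => ‖fderiv ℝ ψ x‖)
    refine ⟨C₀, ?_⟩
    rintro _ ⟨x', rfl⟩
    exact hC₀ x'
  have hS0 : 0 ≤ S := (norm_nonneg _).trans (hSb 0)
  have hψlip : ∀ u v : EuclideanSpace ℝ (Fin n), ‖ψ u - ψ v‖ ≤ S * ‖u - v‖ := by
    intro u v
    exact convex_univ.norm_image_sub_le_of_norm_fderiv_le
      (fun x _ => (hψ.differentiable one_ne_zero).differentiableAt)
      (fun x _ => hSb x) trivial trivial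
  obtain ⟨Mψ, hMψ⟩ := hψc.exists_bound_of_continuous hψ.continuous
  have key := fun y₁ y₂ => phi_key hm ha hc hgrowth hS0 hψlip hMψ hr hψsupp hh0 hm1
    hX0 hXd hφ y₁ y₂
  -- global Lipschitz constant
  have hL0 : 0 ≤ S / (1 - m * h) * (1 + r) ^ κ := by positivity
  have lip : LipschitzWith ⟨S / (1 - m * h) * (1 + r) ^ κ, hL0⟩ φ := by
    apply LipschitzWith.of_dist_le_mul
    intro y₁ y₂
    rw [Real.dist_eq, dist_eq_norm]
    calc |φ y₁ - φ y₂| ≤ (S / (1 - m * h) * (1 + r) ^ κ) *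
          (1 + min ‖y₁‖ ‖y₂‖) ^ (-κ) * ‖y₁ - y₂‖ := key y₁ y₂
      _ ≤ (S / (1 - m * h) * (1 + r) ^ κ) * 1 * ‖y₁ - y₂‖ := by
          apply mul_le_mul_of_nonneg_right _ (norm_nonneg _)
          apply mul_le_mul_of_nonneg_left _ hL0
          apply Real.rpow_le_one_of_one_le_of_nonpos
          · have : 0 ≤ min ‖y₁‖ ‖y₂‖ := le_min (norm_nonneg _) (norm_nonneg _)
            linarith
          · linarith [hκ0]
      _ = (S / (1 - m * h) * (1 + r) ^ κ) * ‖y₁ - y₂‖ := by ring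
  filter_upwards [lip.ae_differentiableAt] with y hy
  refine ⟨fderiv ℝ φ y, hy.hasFDerivAt, ?_⟩
  set A := S / (1 - m * h) * (1 + r) ^ κ with hAdef
  set D := fderiv ℝ φ y with hDdef
  have htarget0 : 0 ≤ A * (1 + ‖y‖) ^ (-κ) := by positivity
  apply ContinuousLinearMap.opNorm_le_bound _ htarget0
  intro v
  rcases eq_or_ne v 0 with rfl | hv
  · simp
  have hv0 : 0 < ‖v‖ := norm_pos_iff.2 hv
  have hcurve : HasDerivAt (fun t : ℝ => φ (y + t • v)) (D v) 0 := by
    have h1 : HasDerivAt (fun t : ℝ => y + t • v) v 0 := by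
      simpa using ((hasDerivAt_id (0:ℝ)).smul_const v).const_add y
    have h2 : y + (0:ℝ) • v = y := by simp
    have h3 : HasFDerivAt φ D (y + (0:ℝ) • v) := by rw [h2]; exact hy.hasFDerivAt
    exact h3.comp_hasDerivAt 0 h1
  have hslope := hasDerivAt_iff_tendsto_slope.1 hcurve
  have hnorm : Filter.Tendsto (fun t => |slope (fun t : ℝ => φ (y + t • v)) 0 t|)
      (nhdsWithin 0 {(0:ℝ)}ᶜ) (nhds ‖D v‖) := by
    simpa [Real.norm_eq_abs] using hslope.norm
  set G : ℝ → ℝ := fun t => A * (1 + (‖y‖ - |t| * ‖v‖)) ^ (-κ) * ‖v‖ with hGdef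
  have hGcont : Filter.Tendsto G (nhdsWithin 0 {(0:ℝ)}ᶜ) (nhds (A * (1 + ‖y‖) ^ (-κ) * ‖v‖)) := by
    have hc1 : ContinuousAt G 0 := by
      apply (continuousAt_const.mul ?_).mul continuousAt_const
      have hinner : ContinuousAt (fun t : ℝ => 1 + (‖y‖ - |t| * ‖v‖)) 0 :=
        (continuousAt_const.add (continuousAt_const.sub
          ((continuous_abs.continuousAt).mul continuousAt_const)))
      apply hinner.rpow_const
      left
      have : (0:ℝ) < 1 + (‖y‖ - |(0:ℝ)| * ‖v‖) := by simp; positivity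
      simpa using this.ne'
    have h0 : G 0 = A * (1 + ‖y‖) ^ (-κ) * ‖v‖ := by simp [hGdef]
    rw [← h0]
    exact hc1.continuousWithinAt
  have hev : ∀ᶠ t in nhdsWithin (0:ℝ) {(0:ℝ)}ᶜ,
      |slope (fun t : ℝ => φ (y + t • v)) 0 t| ≤ G t := by
    have hδ : 0 < (1 + ‖y‖) / ‖v‖ := by positivity
    have hball : ∀ᶠ t in nhds (0:ℝ), |t| < (1 + ‖y‖) / ‖v‖ := by
      have := Metric.ball_mem_nhds (0:ℝ) hδ
      filter_upwards [this] with t ht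
      simpa [Real.dist_eq] using ht
    filter_upwards [nhdsWithin_le_nhds hball, self_mem_nhdsWithin] with t ht ht0
    have ht0' : t ≠ 0 := ht0
    have habs : 0 < |t| := abs_pos.2 ht0'
    have ht' : |t| * ‖v‖ < 1 + ‖y‖ := (lt_div_iff₀ hv0).1 ht
    have hpos : 0 < 1 + (‖y‖ - |t| * ‖v‖) := by linarith
    have hnorm_sub : ‖y + t • v - y‖ = |t| * ‖v‖ := by
      simp [norm_smul, Real.norm_eq_abs]
    have hmin : ‖y‖ - |t| * ‖v‖ ≤ min ‖y + t • v‖ ‖y‖ := by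
      apply le_min
      · have h4 : ‖y‖ ≤ ‖y + t • v‖ + ‖t • v‖ := by
          have := norm_add_le (y + t • v) (-(t • v))
          simpa using this
        have h5 : ‖t • v‖ = |t| * ‖v‖ := by simp [norm_smul, Real.norm_eq_abs]
        linarith
      · nlinarith [abs_nonneg t, norm_nonneg v, mul_nonneg (abs_nonneg t) (norm_nonneg v)]
    have hrmono : (1 + min ‖y + t • v‖ ‖y‖) ^ (-κ) ≤ (1 + (‖y‖ - |t| * ‖v‖)) ^ (-κ) :=
      Real.rpow_le_rpow_of_nonpos hpos (by linarith) (neg_nonpos.2 hκ0)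
    have hk := key (y + t • v) y
    rw [hnorm_sub] at hk
    have hs : slope (fun t : ℝ => φ (y + t • v)) 0 t = (φ (y + t • v) - φ y) / t := by
      rw [slope_def_field]
      simp
    rw [hs, abs_div]
    rw [div_le_iff₀ habs]
    have hA0 : 0 ≤ A := hL0
    calc |φ (y + t • v) - φ y| ≤ A * (1 + min ‖y + t • v‖ ‖y‖) ^ (-κ) * (|t| * ‖v‖) := hk
      _ ≤ A * (1 + (‖y‖ - |t| * ‖v‖)) ^ (-κ) * (|t| * ‖v‖) := by
          apply mul_le_mul_of_nonneg_right _ (by positivity)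
          exact mul_le_mul_of_nonneg_left hrmono hA0
      _ = G t * |t| := by rw [hGdef]; ring
  exact le_of_tendsto_of_tendsto hnorm hGcont hev
end
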